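/- Uniqueness of the bounded solution: suppose α ∈ (0,1). If U : ℝⁿ → ℝ is bounded and satisfies the Bellman equation U(x) = max( α · sup_{d ∈ D} U(f(x,d)), max_{1 ≤ j ≤ n₀} g_j(x) ) for every x ∈ ℝⁿ, then U(x) = V(x) for every x ∈ ℝⁿ, where V is the value function. -/
import Mathlib


/-- Trajectory of the discrete-time system `f` from initial state `x`
under input policy `π` : `φ_x^π(0) = x`, `φ_x^π(l+1) = f(φ_x^π(l), π(l))`. -/
noncomputable def traj {n m : ℕ} (f : (Fin n → ℝ) → (Fin m → ℝ) → (Fin n → ℝ))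
    (x : Fin n → ℝ) (π : ℕ → Fin m → ℝ) : ℕ → Fin n → ℝ
  | 0 => x
  | l + 1 => f (traj f x π l) (π l)

/-- Value function `V(x) = sup_{π, l, j} α^l · g_j(φ_x^π(l))`, where the
supremum ranges over input policies `π` (sequences taking values in `D`),
times `l ∈ ℕ` and indices `j ∈ {1,…,n₀}`. -/
noncomputable def valueFun {n m n₀ : ℕ} (f : (Fin n → ℝ) → (Fin m → ℝ) → (Fin n → ℝ))
    (D : Set (Fin m → ℝ)) (g : Fin n₀ → (Fin n → ℝ) → ℝ) (α : ℝ)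
    (x : Fin n → ℝ) : ℝ :=
  sSup {v : ℝ | ∃ π : ℕ → Fin m → ℝ, (∀ i, π i ∈ D) ∧
    ∃ l : ℕ, ∃ j : Fin n₀, v = α ^ l * g j (traj f x π l)}

private lemma traj_shift {n m : ℕ} (f : (Fin n → ℝ) → (Fin m → ℝ) → (Fin n → ℝ))
    (x : Fin n → ℝ) (π : ℕ → Fin m → ℝ) (l : ℕ) :
    traj f x π (l + 1) = traj f (f x (π 0)) (fun i => π (i + 1)) l := by
  induction l with
  | zero => rfl
  | succ l ih =>
    show f (traj f x π (l + 1)) (π (l + 1)) = _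
    rw [ih]
    rfl

/-- uniqueness of the bounded solution: for `α ∈ (0,1)`, any
bounded `U : ℝⁿ → ℝ` satisfying the Bellman equation
`U(x) = max( α · sup_{d ∈ D} U(f(x,d)), max_{1 ≤ j ≤ n₀} g_j(x) )`
coincides with the value function `V`. -/
theorem bellman_bounded_solution_unique {n m n₀ : ℕ} (hn₀ : 1 ≤ n₀)
    (f : (Fin n → ℝ) → (Fin m → ℝ) → (Fin n → ℝ))
    (D : Set (Fin m → ℝ)) (hD : D.Nonempty)
    (g : Fin n₀ → (Fin n → ℝ) → ℝ)
    (hg : ∀ (j : Fin n₀) (x : Fin n → ℝ), -1 < g j x ∧ g j x < 1)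
    (α : ℝ) (hα : α ∈ Set.Ioo (0 : ℝ) 1)
    (U : (Fin n → ℝ) → ℝ)
    (hUbdd : ∃ C : ℝ, ∀ x : Fin n → ℝ, |U x| ≤ C)
    (hUeq : ∀ x : Fin n → ℝ,
      U x = max (α * sSup {v : ℝ | ∃ d ∈ D, v = U (f x d)})
        (⨆ j : Fin n₀, g j x)) :
    ∀ x : Fin n → ℝ, U x = valueFun f D g α x := by
  obtain ⟨C, hC⟩ := hUbdd
  obtain ⟨d₀, hd₀⟩ := hD
  obtain ⟨hα0, hα1⟩ := hα
  have hαne : α ≠ 0 := ne_of_gt hα0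
  set j₀ : Fin n₀ := ⟨0, hn₀⟩ with hj₀
  set S : (Fin n → ℝ) → Set ℝ := fun y =>
    {v : ℝ | ∃ π : ℕ → Fin m → ℝ, (∀ i, π i ∈ D) ∧
      ∃ l : ℕ, ∃ j : Fin n₀, v = α ^ l * g j (traj f y π l)} with hS
  have hVdef : ∀ y, valueFun f D g α y = sSup (S y) := fun y => rfl
  have hSne : ∀ y, (S y).Nonempty := by
    intro y
    exact ⟨g j₀ y, fun _ => d₀, fun _ => hd₀, 0, j₀, by simp [traj]⟩
  have hSbdd : ∀ y, BddAbove (S y) := by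
    intro y
    refine ⟨1, fun v hv => ?_⟩
    obtain ⟨π, hπ, l, j, rfl⟩ := hv
    have h1 : α ^ l ≤ 1 := pow_le_one₀ (le_of_lt hα0) (le_of_lt hα1)
    have h2 : g j (traj f y π l) ≤ 1 := le_of_lt (hg j _).2
    have h3 : (0:ℝ) < α ^ l := pow_pos hα0 l
    nlinarith
  have hVge : ∀ y (π : ℕ → Fin m → ℝ), (∀ i, π i ∈ D) → ∀ l j,
      α ^ l * g j (traj f y π l) ≤ valueFun f D g α y := by
    intro y π hπ l j
    exact le_csSup (hSbdd y) ⟨π, hπ, l, j, rfl⟩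
  have hVlb : ∀ y, -1 < valueFun f D g α y := by
    intro y
    have h := hVge y (fun _ => d₀) (fun _ => hd₀) 0 j₀
    simp only [pow_zero, one_mul] at h
    have := (hg j₀ y).1
    calc -1 < g j₀ y := this
      _ = g j₀ (traj f y (fun _ => d₀) 0) := rfl
      _ ≤ _ := h
  have hC0 : (0:ℝ) ≤ C := le_trans (abs_nonneg _) (hC (fun _ => 0))
  have hUle : ∀ y, U y ≤ C := fun y => (abs_le.mp (hC y)).2
  -- U ≥ supremand pieces
  have hUge_g : ∀ y (j : Fin n₀), g j y ≤ U y := by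
    intro y j
    rw [hUeq y]
    refine le_trans ?_ (le_max_right _ _)
    exact le_ciSup (f := fun j : Fin n₀ => g j y) (Set.Finite.bddAbove (Set.finite_range _)) j
  have hUstep : ∀ y d, d ∈ D → α * U (f y d) ≤ U y := by
    intro y d hd
    rw [hUeq y]
    refine le_trans ?_ (le_max_left _ _)
    have hb : BddAbove {v : ℝ | ∃ d ∈ D, v = U (f y d)} := by
      refine ⟨C, fun v hv => ?_⟩
      obtain ⟨d', _, rfl⟩ := hv
      exact hUle _
    exact mul_le_mul_of_nonneg_left (le_csSup hb ⟨d, hd, rfl⟩) (le_of_lt hα0)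
  -- Part 1 : V ≤ U
  have hUgeTraj : ∀ l (y : Fin n → ℝ) (π : ℕ → Fin m → ℝ), (∀ i, π i ∈ D) →
      ∀ j, α ^ l * g j (traj f y π l) ≤ U y := by
    intro l
    induction l with
    | zero => intro y π hπ j; simpa [traj] using hUge_g y j
    | succ l ih =>
      intro y π hπ j
      rw [traj_shift]
      have h1 := ih (f y (π 0)) (fun i => π (i + 1)) (fun i => hπ (i + 1)) j
      have h2 := hUstep y (π 0) (hπ 0)
      have : α ^ (l + 1) * g j (traj f (f y (π 0)) (fun i => π (i + 1)) l)
          = α * (α ^ l * g j (traj f (f y (π 0)) (fun i => π (i + 1)) l)) := by ring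
      rw [this]
      calc α * (α ^ l * g j (traj f (f y (π 0)) (fun i => π (i + 1)) l))
          ≤ α * U (f y (π 0)) := mul_le_mul_of_nonneg_left h1 (le_of_lt hα0)
        _ ≤ U y := h2
  have hVleU : ∀ y, valueFun f D g α y ≤ U y := by
    intro y
    rw [hVdef]
    refine csSup_le (hSne y) ?_
    rintro v ⟨π, hπ, l, j, rfl⟩
    exact hUgeTraj l y π hπ j
  -- α V(f y d) ≤ V y for d ∈ D
  have hαV : ∀ y d, d ∈ D → α * valueFun f D g α (f y d) ≤ valueFun f D g α y := by
    intro y d hd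
    rw [mul_comm, ← le_div_iff₀ hα0, hVdef]
    refine csSup_le (hSne _) ?_
    rintro v ⟨π, hπ, l, j, rfl⟩
    rw [le_div_iff₀ hα0]
    set π' : ℕ → Fin m → ℝ := fun i => match i with | 0 => d | k + 1 => π k with hπ'
    have hπ'mem : ∀ i, π' i ∈ D := by
      intro i; cases i with
      | zero => exact hd
      | succ k => exact hπ k
    have htr : traj f y π' (l + 1) = traj f (f y d) π l := by
      rw [traj_shift]
    have := hVge y π' hπ'mem (l + 1) j
    rw [htr] at this
    calc α ^ l * g j (traj f (f y d) π l) * α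
        = α ^ (l + 1) * g j (traj f (f y d) π l) := by ring
      _ ≤ valueFun f D g α y := this
  -- Part 2 : key inequality by induction
  have key : ∀ k (y : Fin n → ℝ) (ε : ℝ), 0 < ε →
      U y ≤ valueFun f D g α y + α ^ k * (C + 1) + ε := by
    intro k
    induction k with
    | zero =>
      intro y ε hε
      have h1 := hUle y
      have h2 := hVlb y
      simp only [pow_zero, one_mul]
      linarith
    | succ k ih =>
      intro y ε hε
      rw [hUeq y]
      have hpow : (0:ℝ) < α ^ (k + 1) := pow_pos hα0 _
      refine max_le ?_ ?_
      · -- α * sSup T ≤ V y + α^{k+1}(C+1) + ε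
        have hTne : {v : ℝ | ∃ d ∈ D, v = U (f y d)}.Nonempty := ⟨U (f y d₀), d₀, hd₀, rfl⟩
        have hsup : sSup {v : ℝ | ∃ d ∈ D, v = U (f y d)}
            ≤ (valueFun f D g α y + α ^ (k + 1) * (C + 1) + ε / 2) / α := by
          refine csSup_le hTne ?_
          rintro v ⟨d, hd, rfl⟩
          show U (f y d) ≤ (valueFun f D g α y + α ^ (k + 1) * (C + 1) + ε / 2) / α
          rw [le_div_iff₀ hα0]
          have h1 := ih (f y d) (ε / (2 * α)) (by positivity)
          have h2 := hαV y d hd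
          have h3 : α * (ε / (2 * α)) = ε / 2 := by field_simp
          have h4 : α * U (f y d) ≤ α * (valueFun f D g α (f y d) + α ^ k * (C + 1)
              + ε / (2 * α)) := mul_le_mul_of_nonneg_left h1 (le_of_lt hα0)
          have h5 : α * (valueFun f D g α (f y d) + α ^ k * (C + 1) + ε / (2 * α))
              = α * valueFun f D g α (f y d) + α ^ (k + 1) * (C + 1) + ε / 2 := by
            rw [mul_add, mul_add, h3]; ring
          rw [h5] at h4
          rw [mul_comm]
          linarith
        have := (le_div_iff₀ hα0).mp hsup
        rw [mul_comm] at this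
        linarith
      · -- max_j g_j ≤ V y + …
        have : (⨆ j : Fin n₀, g j y) ≤ valueFun f D g α y := by
          haveI : Nonempty (Fin n₀) := ⟨j₀⟩
          refine ciSup_le fun j => ?_
          have h := hVge y (fun _ => d₀) (fun _ => hd₀) 0 j
          simpa [traj] using h
        have hnn : (0:ℝ) ≤ α ^ (k + 1) * (C + 1) := by positivity
        linarith
  -- conclude
  intro x
  refine le_antisymm ?_ (hVleU x)
  refine le_of_forall_pos_le_add ?_
  intro ε hε
  obtain ⟨k, hk⟩ := exists_pow_lt_of_lt_one (show (0:ℝ) < ε / (2 * (C + 1)) by positivity) hα1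
  have hk' : α ^ k * (C + 1) < ε / 2 := by
    have h1 : (0:ℝ) < C + 1 := by linarith
    calc α ^ k * (C + 1) < ε / (2 * (C + 1)) * (C + 1) := by
          exact mul_lt_mul_of_pos_right hk h1
      _ = ε / 2 := by field_simp
  have := key k x (ε / 2) (by positivity)
  linarith
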